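/- Let m ≥ 0 be an integer, ℓ ≥ 0, and let λ ∈ I_0^ℓ(c_{−m}). Then λ has either m or m+1 parts; set r_j = λ_j − (c_{−m})_j for 1 ≤ j ≤ m (each r_j ∈ {0,1,2}) and r_{m+1} = λ_{m+1} ∈ {0,1} (taking λ_{m+1} = 0 if λ has only m parts). Let ε_m = 1 if m is odd and 0 if m is even, and let a(λ) be the number of even entries (with 0 counted as even) of the sequence obtained from λ by appending one entry 0 when the number of parts of λ is odd. Then 2^{r_{m+1} ε_m} · r_1! ⋯ r_m! = 2^{(ℓ − a(λ) + ε_m)/2}. -/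

import Mathlib

noncomputable section

namespace Rect

/-- `l` is a partition: weakly decreasing list of positive integers -/
def IsPartition (l : List ℕ) : Prop := l.Pairwise (· ≥ ·) ∧ ∀ x ∈ l, 0 < x

/-- `l` is a strict partition: strictly decreasing list of positive integers -/
def IsStrictPartition (l : List ℕ) : Prop := l.Pairwise (· > ·) ∧ ∀ x ∈ l, 0 < x

/-- the color of a node in column `j` (columns are 1-indexed) -/
def nodeColor (j : ℕ) : ℕ := if j % 4 = 0 ∨ j % 4 = 1 then 0 else 1

/-- `I_i^ℓ(λ)`: strict partitions `μ ⊇ λ` with `|μ| = |λ| + ℓ` all of whose nodes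
outside `λ` have color `i` -/
def ISet (i ℓ : ℕ) (lam : List ℕ) : Set (List ℕ) :=
  {mu | IsStrictPartition mu ∧ (∀ j, lam.getD j 0 ≤ mu.getD j 0) ∧
    mu.sum = lam.sum + ℓ ∧
    ∀ j c, lam.getD j 0 < c → c ≤ mu.getD j 0 → nodeColor c = i}

/-- the 4-bar core `c_m` -/
def cBar (m : ℤ) : List ℕ :=
  if 0 ≤ m then (List.range m.toNat).map fun i => 4 * (m.toNat - 1 - i) + 1
  else (List.range (-m).toNat).map fun i => 4 * ((-m).toNat - 1 - i) + 3

/-- `λ[0]`: the even parts of `λ`, halved -/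
def bar0 (lam : List ℕ) : List ℕ := (lam.filter fun x => x % 2 == 0).map (· / 2)

/-- the charge of the Maya diagram of `λ` -/
def charge (lam : List ℕ) : ℤ :=
  ((lam.filter fun x => x % 4 == 1).length : ℤ) -
    ((lam.filter fun x => x % 4 == 3).length : ℤ)

/-- membership in the Maya diagram
`M(λ) = {k ≥ 0 : 4k+1 ∈ λ} ∪ {k < 0 : -4k-1 ∉ λ}` -/
def mayaMem (lam : List ℕ) (k : ℤ) : Bool :=
  if 0 ≤ k then decide ((4 * k.toNat + 1) ∈ lam) else !(decide ((4 * (-k).toNat - 1) ∈ lam))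

/-- the elements of the Maya diagram of `λ` in `[-B, B]`, `B = |λ|+1`, in
decreasing order; all elements `< -B` belong to `M(λ)` and all elements `> B`
do not, so this records all the information of `M(λ)`. -/
def mayaList (lam : List ℕ) : List ℤ :=
  ((List.range (2 * (lam.sum + 1) + 1)).map fun j => (lam.sum + 1 : ℤ) - j).filter (mayaMem lam)

/-- `λ[1]`: writing the Maya diagram as a decreasing sequence `i_1 > i_2 > ⋯`,
this is the partition `(i_1 + 1 - c, i_2 + 2 - c, …)` where `c` is the charge -/
def bar1 (lam : List ℕ) : List ℕ :=
  (((mayaList lam).zipIdx).map fun p => (p.1 + (p.2 : ℤ) + 1 - charge lam).toNat).filter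
    fun x => decide (0 < x)

/-- the number `g(λ)` of pairs of beads `(a, b)` on the 4-bar abacus with
`a ≡ 1 (mod 4)`, `b` even and `a > b`; a bead is put at `0` iff `M < 0` and `λ`
has exactly `-M` parts -/
def gnum (M : ℤ) (lam : List ℕ) : ℕ :=
  let beads := if M < 0 ∧ lam.length = (-M).toNat then 0 :: lam else lam
  ((beads.filter fun a => a % 4 == 1).map fun a =>
    beads.countP fun b => decide (b % 2 = 0 ∧ b < a)).sum

/-- the sign `δ(λ) = (-1)^{g(λ)}` for `λ ∈ I_i^ℓ(c_M)` -/
def deltaSign (M : ℤ) (lam : List ℕ) : ℤ := (-1) ^ gnum M lam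

/-- `ε_m`: 1 if `m` is odd, 0 if `m` is even -/
def epsN (m : ℕ) : ℕ := if m % 2 = 1 then 1 else 0

end Rect

/-!
The rows of `c_{-m}` have lengths `≡ 3 (mod 4)`, so a strip of colour-0 nodes can only add the
columns `≡ 0, 1 (mod 4)` right after them: `r_j ≤ 2` for `j ≤ m`, at most column `1` in row `m + 1`,
and strictness leaves no room for a further row. Row `j ≤ m` then has length `≡ 3 + r_j (mod 4)`,
which is even exactly when `r_j = 1`, while `r_j! = 2` exactly when `r_j = 2`. As
`ℓ = ∑ r_j + r_{m+1}`, the identity reduces to parity bookkeeping.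
-/

open Finset

theorem List.sum_eq_sum_range_getD_of_length_le {M : Type*} [AddCommMonoid M] {l : List M}
    {n : ℕ} (hn : l.length ≤ n) : l.sum = ∑ j ∈ Finset.range n, l.getD j 0 := by
  induction l generalizing n with
  | nil => simp
  | cons a l ih =>
    cases n with
    | zero => simp at hn
    | succ n => simp [Finset.sum_range_succ', ih (n := n) (by simpa using hn), add_comm]

theorem List.countP_eq_card_filter_range {α : Type*} (l : List α) (p : α → Bool) (d : α) :
    l.countP p = #{j ∈ Finset.range l.length | p (l.getD j d)} := by
  induction l with
  | nil => simp
  | cons a l ih =>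
    rw [card_filter, List.length_cons, Finset.sum_range_succ', List.countP_cons, ih, card_filter]
    simp

theorem Finset.sum_eq_card_filter_add_two_mul_of_le_two {ι : Type*} {s : Finset ι} {f : ι → ℕ}
    (hf : ∀ i ∈ s, f i ≤ 2) : ∑ i ∈ s, f i = #{i ∈ s | f i = 1} + 2 * #{i ∈ s | f i = 2} := by
  rw [card_filter, card_filter, mul_sum, ← sum_add_distrib]
  refine sum_congr rfl fun i hi => ?_
  have := hf i hi
  split_ifs <;> omega

theorem Finset.prod_factorial_eq_two_pow_of_le_two {ι : Type*} {s : Finset ι} {f : ι → ℕ}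
    (hf : ∀ i ∈ s, f i ≤ 2) : ∏ i ∈ s, (f i).factorial = 2 ^ #{i ∈ s | f i = 2} := by
  rw [card_filter, ← prod_pow_eq_pow_sum]
  refine prod_congr rfl fun i hi => ?_
  have : f i = 0 ∨ f i = 1 ∨ f i = 2 := by have := hf i hi; omega
  rcases this with h | h | h <;> simp [h]

namespace Rect

theorem IsStrictPartition.getD_eq_zero_iff {l : List ℕ} (hl : IsStrictPartition l) {j : ℕ} :
    l.getD j 0 = 0 ↔ l.length ≤ j := by
  refine ⟨fun h => ?_, List.getD_eq_default _ _⟩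
  by_contra hj
  rw [List.getD_eq_getElem _ _ (by omega)] at h
  exact (hl.2 _ (List.getElem_mem _)).ne' h

theorem IsStrictPartition.length_le_of_getD_le_one {l : List ℕ} (hl : IsStrictPartition l)
    {j : ℕ} (hj : l.getD j 0 ≤ 1) : l.length ≤ j + 1 := by
  by_contra hlen
  have hpos : l.getD (j + 1) 0 ≠ 0 := by rw [Ne, hl.getD_eq_zero_iff]; omega
  have hlt : l.getD (j + 1) 0 < l.getD j 0 := by
    rw [List.getD_eq_getElem _ _ (by omega), List.getD_eq_getElem _ _ (by omega)]
    exact List.pairwise_iff_getElem.mp hl.1 _ _ _ _ (by omega)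
  omega

theorem nodeColor_four_mul_add_two (k : ℕ) : nodeColor (4 * k + 2) = 1 := by
  simp [nodeColor]

theorem getD_lt_of_mem_ISet {i ℓ : ℕ} {lam mu : List ℕ} (h : mu ∈ ISet i ℓ lam) {j c : ℕ}
    (hc : lam.getD j 0 < c) (hne : nodeColor c ≠ i) : mu.getD j 0 < c :=
  lt_of_not_ge fun hle => hne (h.2.2.2 j c hc hle)

theorem length_le_of_mem_ISet {i ℓ : ℕ} {lam mu : List ℕ} (h : mu ∈ ISet i ℓ lam)
    (hlam : ∀ x ∈ lam, 0 < x) : lam.length ≤ mu.length := by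
  by_contra hlen
  have hle := h.2.1 mu.length
  rw [List.getD_eq_getElem _ _ (by omega), List.getD_eq_default _ _ le_rfl] at hle
  exact (hlam _ (List.getElem_mem _)).ne' (Nat.eq_zero_of_le_zero hle)

theorem cBar_neg_natCast (m : ℕ) :
    cBar (-(m : ℤ)) = (List.range m).map fun i => 4 * (m - 1 - i) + 3 := by
  unfold cBar
  split_ifs with hm
  · obtain rfl : m = 0 := by omega
    rfl
  · simp

theorem length_cBar_neg_natCast (m : ℕ) : (cBar (-(m : ℤ))).length = m := by
  simp [cBar_neg_natCast]

theorem pos_of_mem_cBar_neg_natCast {m x : ℕ} (hx : x ∈ cBar (-(m : ℤ))) : 0 < x := by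
  simp only [cBar_neg_natCast, List.mem_map] at hx
  omega

theorem getD_cBar_neg_natCast {m j : ℕ} (hj : j < m) :
    (cBar (-(m : ℤ))).getD j 0 = 4 * (m - 1 - j) + 3 := by
  simp [cBar_neg_natCast, List.getD_eq_getElem?_getD, hj]

section

variable {m ℓ : ℕ} {lam : List ℕ}

theorem getD_sub_getD_cBar_le_two (h : lam ∈ ISet 0 ℓ (cBar (-(m : ℤ)))) {j : ℕ} (hj : j < m) :
    lam.getD j 0 - (cBar (-(m : ℤ))).getD j 0 ≤ 2 := by
  have hc := getD_cBar_neg_natCast hj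
  have := getD_lt_of_mem_ISet h (j := j) (c := 4 * (m - j) + 2) (by omega)
    (by rw [nodeColor_four_mul_add_two]; decide)
  omega

theorem getD_le_one_of_mem_ISet_cBar (h : lam ∈ ISet 0 ℓ (cBar (-(m : ℤ)))) :
    lam.getD m 0 ≤ 1 := by
  have hc : (cBar (-(m : ℤ))).getD m 0 = 0 :=
    List.getD_eq_default _ _ (length_cBar_neg_natCast m).le
  have := getD_lt_of_mem_ISet h (j := m) (c := 4 * 0 + 2) (by omega)
    (by rw [nodeColor_four_mul_add_two]; decide)
  omega

theorem length_eq_of_mem_ISet_cBar (h : lam ∈ ISet 0 ℓ (cBar (-(m : ℤ)))) :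
    lam.length = m + lam.getD m 0 := by
  have hmin := length_le_of_mem_ISet h fun _ => pos_of_mem_cBar_neg_natCast
  rw [length_cBar_neg_natCast] at hmin
  have hone := getD_le_one_of_mem_ISet_cBar h
  have hmax := h.1.length_le_of_getD_le_one hone
  have hzero := h.1.getD_eq_zero_iff (j := m)
  omega

theorem sum_sub_getD_cBar_add_getD (h : lam ∈ ISet 0 ℓ (cBar (-(m : ℤ)))) :
    ∑ j ∈ range m, (lam.getD j 0 - (cBar (-(m : ℤ))).getD j 0) + lam.getD m 0 = ℓ := by
  have hlen : lam.length ≤ m + 1 := by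
    have := length_eq_of_mem_ISet_cBar h
    have := getD_le_one_of_mem_ISet_cBar h
    omega
  have hlam := List.sum_eq_sum_range_getD_of_length_le hlen
  rw [sum_range_succ] at hlam
  have hcbar := List.sum_eq_sum_range_getD_of_length_le (length_cBar_neg_natCast m).le
  have hsplit : ∑ j ∈ range m, lam.getD j 0 = ∑ j ∈ range m, (cBar (-(m : ℤ))).getD j 0 +
      ∑ j ∈ range m, (lam.getD j 0 - (cBar (-(m : ℤ))).getD j 0) := by
    rw [← sum_add_distrib]
    exact sum_congr rfl fun j _ => (Nat.add_sub_cancel' (h.2.1 j)).symm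
  have hsum := h.2.2.1
  omega

theorem countP_even_eq_card_filter_getD_sub_getD_cBar_eq_one
    (h : lam ∈ ISet 0 ℓ (cBar (-(m : ℤ)))) :
    lam.countP (fun x => x % 2 == 0) =
      #{j ∈ range m | lam.getD j 0 - (cBar (-(m : ℤ))).getD j 0 = 1} := by
  rw [List.countP_eq_card_filter_range _ _ 0, length_eq_of_mem_ISet_cBar h]
  have hlast : {j ∈ range (m + lam.getD m 0) | lam.getD j 0 % 2 == 0} =
      {j ∈ range m | lam.getD j 0 % 2 == 0} := by
    rcases Nat.le_one_iff_eq_zero_or_eq_one.mp (getD_le_one_of_mem_ISet_cBar h) with h0 | h1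
    · rw [h0, add_zero]
    · rw [h1, range_add_one, filter_insert, h1, if_neg (by decide)]
  rw [hlast]
  refine congrArg card (filter_congr fun j hj => ?_)
  have hj := mem_range.mp hj
  have hc := getD_cBar_neg_natCast hj
  have hle := getD_sub_getD_cBar_le_two h hj
  have hge := h.2.1 j
  simp only [beq_iff_eq]
  omega

end

/-- For `m ≥ 0` and `λ ∈ I_0^ℓ(c_{-m})`: `λ` has `m` or `m+1` parts, each
difference `r_j = λ_j - (c_{-m})_j` (`j ≤ m`) lies in `{0,1,2}`,
`r_{m+1} = λ_{m+1} ∈ {0,1}`, and with `a(λ)` the number of even entries of `λ`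
(a `0` appended when the number of parts is odd, `0` counting as even) one has
`2^{r_{m+1} ε_m} · r_1! ⋯ r_m! = 2^{(ℓ - a(λ) + ε_m)/2}` (in particular
`ℓ - a(λ) + ε_m` is a nonnegative even integer `2e`). -/
theorem factorial_product_zero (m ℓ : ℕ) (lam : List ℕ)
    (h : lam ∈ ISet 0 ℓ (cBar (-(m : ℤ)))) :
    (lam.length = m ∨ lam.length = m + 1) ∧
    (∀ j < m, lam.getD j 0 - (cBar (-(m : ℤ))).getD j 0 ∈ ({0, 1, 2} : Set ℕ)) ∧
    lam.getD m 0 ∈ ({0, 1} : Set ℕ) ∧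
    ∃ e : ℕ,
      2 * e + ((lam.countP fun x => x % 2 == 0) + (if lam.length % 2 = 1 then 1 else 0))
          = ℓ + epsN m ∧
      2 ^ (lam.getD m 0 * epsN m) *
          (∏ j ∈ Finset.range m,
            Nat.factorial (lam.getD j 0 - (cBar (-(m : ℤ))).getD j 0)) = 2 ^ e := by
  have hr : ∀ j ∈ range m, lam.getD j 0 - (cBar (-(m : ℤ))).getD j 0 ≤ 2 :=
    fun j hj => getD_sub_getD_cBar_le_two h (mem_range.mp hj)
  have hlast := getD_le_one_of_mem_ISet_cBar h
  have hlen := length_eq_of_mem_ISet_cBar h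
  have hsum := sum_sub_getD_cBar_add_getD h
  rw [sum_eq_card_filter_add_two_mul_of_le_two hr] at hsum
  refine ⟨by omega, fun j hj => ?_, by simp only [Set.mem_insert_iff, Set.mem_singleton_iff]; omega,
    #{j ∈ range m | lam.getD j 0 - (cBar (-(m : ℤ))).getD j 0 = 2} + lam.getD m 0 * epsN m,
    ?_, ?_⟩
  · have := hr j (mem_range.mpr hj)
    simp only [Set.mem_insert_iff, Set.mem_singleton_iff]
    omega
  · rw [countP_even_eq_card_filter_getD_sub_getD_cBar_eq_one h, hlen]
    unfold epsN
    split_ifs <;> omega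
  · rw [prod_factorial_eq_two_pow_of_le_two hr, ← pow_add, add_comm]

end Rect
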